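/- (Probabilistic form of Theorem 2, accuracy enhancement with feedback.) Let τ > 0, σ_c ∈ (0, τ), ε, ε_c ∈ [0,1], m ≥ 1 an integer, μ = m·τ, and σ > 0 with σ < τ − σ_c and σ ≥ μ/(m+1). Let t^in be a positive random variable with P(t^in ∈ (μ − σ/2, μ + σ/2)) ≥ 1 − ε, let κ be a Markov kernel from ℝ to ℝ satisfying the (τ, σ_c, ε_c)-stability criterion, and let t^out = t^in + Y, where conditionally on t^in = x the variable Y has law κ(s(x)), with s(x) = x − m(x)·τ and m(x) the unique integer such that s(x) ∈ (−τ/2, τ/2]. Then P(t^out ∈ (μ + (τ−σ_c)/2, μ + (τ+σ_c)/2)) ≥ (1 − ε)(1 − ε_c), and hence the (ε + ε_c)-inaccuracy of t^out (as a first tick) satisfies Σ^out(ε + ε_c) ≤ σ_c/(μ + τ/2) < (σ/μ)·(2σ_c/τ). -/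
import Mathlib


open MeasureTheory ProbabilityTheory

/-- The `ε`-inaccuracy `Σ(ε)` of a random variable `S` interpreted as the time of a
tick of a clock (here with tick index `j`): the infimum of `j·σ/μ` over all `μ > 0` and
`σ ≥ 0` such that `S` lies in `[μ − σ/2, μ + σ/2]` with probability at least `1 − ε`;
it is `+∞` if no such pair exists.  For the first tick one takes `j = 1`. -/
noncomputable def inaccuracy {Ω : Type*} [MeasurableSpace Ω] (P : Measure Ω)
    (S : Ω → ℝ) (j : ℕ) (ε : ℝ) : ENNReal :=
  ⨅ (μ : ℝ) (σ : ℝ) (_ : 0 < μ) (_ : 0 ≤ σ)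
    (_ : ENNReal.ofReal (1 - ε) ≤ P {ω | S ω ∈ Set.Icc (μ - σ / 2) (μ + σ / 2)}),
    ENNReal.ofReal (j * σ / μ)

/-- A Markov kernel `κ` from `ℝ` to `ℝ` satisfies the `(τ, σc, εc)`-**stability
criterion** if for every switch-on phase `s ∈ (−(τ−σc)/2, (τ−σc)/2)`, the waiting-time
distribution `κ(s)` assigns probability at least `1 − εc` to the set of waiting times
`y` with `y + s ∈ ((τ−σc)/2, (τ+σc)/2)`. -/
def StabilityCriterion (κ : Kernel ℝ ℝ) (τ σc εc : ℝ) : Prop :=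
  ∀ s ∈ Set.Ioo (-((τ - σc) / 2)) ((τ - σc) / 2),
    ENNReal.ofReal (1 - εc) ≤ κ s {y | y + s ∈ Set.Ioo ((τ - σc) / 2) ((τ + σc) / 2)}

/-- The phase of a period-`τ` clock at time `x`: the unique `s ∈ (−τ/2, τ/2]` such
that `x − s` is an integer multiple of `τ`. -/
noncomputable def phase (τ x : ℝ) : ℝ := x - τ * ⌈x / τ - 1 / 2⌉

lemma phase_measurable (τ : ℝ) : Measurable (phase τ) := by
  unfold phase
  exact measurable_id.sub
    ((measurable_from_top.comp (((measurable_id.div_const τ).sub_const (1 / 2)).ceil)).const_mul τ)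

lemma phase_eq_of_close {τ x : ℝ} (hτ : 0 < τ) (m : ℕ)
    (h1 : (m : ℝ) * τ - τ / 2 < x) (h2 : x < (m : ℝ) * τ + τ / 2) :
    phase τ x = x - (m : ℝ) * τ := by
  have hceil : ⌈x / τ - 1 / 2⌉ = (m : ℤ) := by
    rw [Int.ceil_eq_iff]
    have hx1 : (m : ℝ) - 1 / 2 < x / τ := by
      rw [lt_div_iff₀ hτ]; nlinarith
    have hx2 : x / τ < (m : ℝ) + 1 / 2 := by
      rw [div_lt_iff₀ hτ]; nlinarith
    constructor
    · push_cast; linarith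
    · push_cast; linarith
  rw [phase, hceil]
  push_cast
  ring

/-- **Accuracy enhancement with feedback** (probabilistic form of Theorem 2).
Let `τ > 0`, `σc ∈ (0, τ)`, `ε, εc ∈ [0,1]`, `m ≥ 1` an integer, `μ = m·τ`, and
`σ > 0` with `σ < τ − σc` and `σ ≥ μ/(m+1)`.  Let `t^in` be a positive random variable
with `P(t^in ∈ (μ − σ/2, μ + σ/2)) ≥ 1 − ε`, let `κ` be a Markov kernel satisfying the
`(τ, σc, εc)`-stability criterion, and let `t^out = t^in + Y` where conditionally on
`t^in = x` the variable `Y` has law `κ(s(x))`, `s(x)` being the phase of `x` modulo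
`τ`.  Then `P(t^out ∈ (μ + (τ−σc)/2, μ + (τ+σc)/2)) ≥ (1 − ε)(1 − εc)`, and hence the
`(ε + εc)`-inaccuracy of `t^out` (as a first tick) satisfies
`Σ^out(ε + εc) ≤ σc/(μ + τ/2) < (σ/μ)·(2σc/τ)`. -/
theorem feedback_accuracy_enhancement {Ω : Type*} [MeasurableSpace Ω]
    (P : Measure Ω) [IsProbabilityMeasure P]
    (ε εc τ σc σ μ : ℝ) (m : ℕ) (κ : Kernel ℝ ℝ) [IsMarkovKernel κ]
    (tin tout : Ω → ℝ) (htin : Measurable tin) (htout : Measurable tout)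
    (hε : ε ∈ Set.Icc (0 : ℝ) 1) (hεc : εc ∈ Set.Icc (0 : ℝ) 1)
    (hτ : 0 < τ) (hσc : σc ∈ Set.Ioo 0 τ)
    (hm : 1 ≤ m) (hμ : μ = m * τ)
    (hσ : 0 < σ) (hστ : σ < τ - σc) (hσμ : μ / (m + 1) ≤ σ)
    (hpos : ∀ᵐ ω ∂P, 0 < tin ω)
    (hconf : ENNReal.ofReal (1 - ε) ≤ P {ω | tin ω ∈ Set.Ioo (μ - σ / 2) (μ + σ / 2)})
    (hstable : StabilityCriterion κ τ σc εc)
    (hcond : ∀ B : Set ℝ, MeasurableSet B →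
      ∀ A : Set Ω, MeasurableSet[MeasurableSpace.comap tin inferInstance] A →
        P (A ∩ {ω | tout ω - tin ω ∈ B}) = ∫⁻ ω in A, κ (phase τ (tin ω)) B ∂P) :
    ENNReal.ofReal ((1 - ε) * (1 - εc)) ≤
        P {ω | tout ω ∈ Set.Ioo (μ + (τ - σc) / 2) (μ + (τ + σc) / 2)} ∧
      inaccuracy P tout 1 (ε + εc) ≤ ENNReal.ofReal (σc / (μ + τ / 2)) ∧
      σc / (μ + τ / 2) < (σ / μ) * (2 * σc / τ) := by
  obtain ⟨hε0, hε1⟩ := hε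
  obtain ⟨hεc0, hεc1⟩ := hεc
  obtain ⟨hσc0, hσcτ⟩ := hσc
  have hm1 : (1 : ℝ) ≤ (m : ℝ) := by exact_mod_cast hm
  have hμpos : 0 < μ := by rw [hμ]; positivity
  -- the kernel applied after the phase map
  have hph := phase_measurable τ
  set κ' : Kernel ℝ ℝ := κ.comap (phase τ) hph with hκ'
  -- two measures on ℝ × ℝ
  set F : Ω → ℝ × ℝ := fun ω => (tin ω, tout ω - tin ω) with hF
  have hFm : Measurable F := htin.prodMk (htout.sub htin)
  set ρ : Measure (ℝ × ℝ) := P.map F with hρ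
  set ν : Measure (ℝ × ℝ) := (P.map tin) ⊗ₘ κ' with hν
  have : IsProbabilityMeasure (P.map tin) := Measure.isProbabilityMeasure_map htin.aemeasurable
  have hρprob : IsProbabilityMeasure ρ := Measure.isProbabilityMeasure_map hFm.aemeasurable
  have hνprob : IsProbabilityMeasure ν := by
    constructor
    rw [hν, Measure.compProd_apply_univ]
    simp
  -- the joint law equals the composition product
  have hρν : ρ = ν := by
    refine ext_of_generate_finite _ generateFrom_prod.symm isPiSystem_prod ?_ ?_
    · rintro _ ⟨s, hs, t, ht, rfl⟩
      have hs' : MeasurableSet s := hs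
      have ht' : MeasurableSet t := ht
      rw [hρ, Measure.map_apply hFm (hs'.prod ht')]
      have hpre : F ⁻¹' (s ×ˢ t) = (tin ⁻¹' s) ∩ {ω | tout ω - tin ω ∈ t} := by
        ext ω; simp [hF, Set.mem_prod]
      rw [hpre, hcond t ht' (tin ⁻¹' s) ⟨s, hs', rfl⟩]
      rw [hν, Measure.compProd_apply_prod hs' ht']
      rw [setLIntegral_map hs' (Kernel.measurable_coe κ' ht') htin]
      simp [hκ', Kernel.comap_apply]
    · rw [hρprob.measure_univ, hνprob.measure_univ]
  -- the good event
  set S₀ : Set ℝ := Set.Ioo (μ - σ / 2) (μ + σ / 2) with hS₀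
  set T : Set ℝ := Set.Ioo (μ + (τ - σc) / 2) (μ + (τ + σc) / 2) with hT
  set C : Set (ℝ × ℝ) := {p : ℝ × ℝ | p.1 ∈ S₀ ∧ p.1 + p.2 ∈ T} with hC
  have hCmeas : MeasurableSet C := by
    apply MeasurableSet.inter
    · exact measurable_fst measurableSet_Ioo
    · exact (measurable_fst.add measurable_snd) measurableSet_Ioo
  -- phase on S₀
  have hphase_eq : ∀ x ∈ S₀, phase τ x = x - μ := by
    intro x hx
    obtain ⟨hx1, hx2⟩ := hx
    rw [hμ] at hx1 hx2 ⊢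
    exact phase_eq_of_close hτ m (by nlinarith) (by nlinarith)
  -- main probability bound
  have h1 : ENNReal.ofReal ((1 - ε) * (1 - εc)) ≤
      P {ω | tout ω ∈ Set.Ioo (μ + (τ - σc) / 2) (μ + (τ + σc) / 2)} := by
    have hsub : F ⁻¹' C ⊆ {ω | tout ω ∈ T} := by
      intro ω hω
      have := hω.2
      simpa [hF] using this
    have hstep : ρ C ≤ P {ω | tout ω ∈ T} := by
      rw [hρ, Measure.map_apply hFm hCmeas]
      exact measure_mono hsub
    refine le_trans ?_ hstep
    rw [hρν, hν, Measure.compProd_apply hCmeas]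
    have hlow : ∀ x ∈ S₀, ENNReal.ofReal (1 - εc) ≤ κ' x (Prod.mk x ⁻¹' C) := by
      intro x hx
      have hs := hphase_eq x hx
      obtain ⟨hx1, hx2⟩ := hx
      have hmem : x - μ ∈ Set.Ioo (-((τ - σc) / 2)) ((τ - σc) / 2) := by
        constructor <;> [nlinarith; nlinarith]
      have hset : Prod.mk x ⁻¹' C =
          {y | y + (x - μ) ∈ Set.Ioo ((τ - σc) / 2) ((τ + σc) / 2)} := by
        ext y
        simp only [hC, Set.mem_preimage, Set.mem_setOf_eq, hT, Set.mem_Ioo, hS₀]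
        constructor
        · rintro ⟨-, h1', h2'⟩; exact ⟨by linarith, by linarith⟩
        · rintro ⟨h1', h2'⟩
          exact ⟨⟨hx1, hx2⟩, by linarith, by linarith⟩
      rw [hκ', Kernel.comap_apply, hs, hset]
      exact hstable _ hmem
    calc ENNReal.ofReal ((1 - ε) * (1 - εc))
        = ENNReal.ofReal (1 - εc) * ENNReal.ofReal (1 - ε) := by
          rw [← ENNReal.ofReal_mul (by linarith)]; ring_nf
      _ ≤ ENNReal.ofReal (1 - εc) * (P.map tin) S₀ := by
          gcongr
          rw [Measure.map_apply htin measurableSet_Ioo]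
          exact hconf
      _ = ∫⁻ _ in S₀, ENNReal.ofReal (1 - εc) ∂(P.map tin) := by
          rw [setLIntegral_const]
      _ ≤ ∫⁻ x in S₀, κ' x (Prod.mk x ⁻¹' C) ∂(P.map tin) := by
          refine setLIntegral_mono (Kernel.measurable_kernel_prodMk_left hCmeas) hlow
      _ ≤ ∫⁻ x, κ' x (Prod.mk x ⁻¹' C) ∂(P.map tin) := setLIntegral_le_lintegral _ _
  -- inaccuracy bound
  have hμτ : 0 < μ + τ / 2 := by linarith
  have h2 : inaccuracy P tout 1 (ε + εc) ≤ ENNReal.ofReal (σc / (μ + τ / 2)) := by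
    have hprob : ENNReal.ofReal (1 - (ε + εc)) ≤
        P {ω | tout ω ∈ Set.Icc ((μ + τ / 2) - σc / 2) ((μ + τ / 2) + σc / 2)} := by
      refine le_trans ?_ (le_trans h1 (measure_mono ?_))
      · exact ENNReal.ofReal_le_ofReal (by nlinarith)
      · intro ω hω
        simp only [Set.mem_setOf_eq, Set.mem_Ioo, Set.mem_Icc] at *
        exact ⟨by linarith [hω.1], by linarith [hω.2]⟩
    have hle : inaccuracy P tout 1 (ε + εc) ≤
        ENNReal.ofReal ((1 : ℕ) * σc / (μ + τ / 2)) := by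
      refine iInf_le_of_le (μ + τ / 2) (iInf_le_of_le σc ?_)
      exact iInf_le_of_le hμτ (iInf_le_of_le (le_of_lt hσc0) (iInf_le _ hprob))
    simpa using hle
  refine ⟨h1, h2, ?_⟩
  -- arithmetic
  have hσm : μ ≤ σ * ((m : ℝ) + 1) := by
    rw [div_le_iff₀ (by positivity)] at hσμ
    exact hσμ
  rw [div_mul_div_comm, div_lt_div_iff₀ hμτ (by positivity)]
  rw [hμ] at hσm ⊢
  nlinarith [mul_pos hτ hσc0, mul_pos hσ hσc0, mul_le_mul_of_nonneg_right hσm (le_of_lt (mul_pos hτ hσc0))]
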